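/- For n ≥ 1, n-th q-derivative of a product of two reciprocal infinite q-products: D_q^n { 1/((ax;q)_∞ (bx;q)_∞) } = (1/((ax;q)_∞(bx;q)_∞)) · sum_{k=0}^n [n choose k]_q a^k b^{n-k} (bx;q)_k, as an identity of formal power series/analytic functions in x for 0<|q|<1. -/

import Mathlib

/-- The q-shifted factorial `(c;q)_n = ∏_{j=0}^{n-1} (1 - c q^j)`. -/
noncomputable def qPoch (a q : ℂ) (n : ℕ) : ℂ := ∏ j ∈ Finset.range n, (1 - a * q ^ j)

/-- The Gaussian binomial coefficient. -/
noncomputable def qBinom (q : ℂ) (n k : ℕ) : ℂ := qPoch q q n / (qPoch q q k * qPoch q q (n - k))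

/-- The infinite q-shifted factorial `(c;q)_∞ = ∏_{j≥0} (1 - c q^j)`. -/
noncomputable def qPochInf (a q : ℂ) : ℂ := ∏' j : ℕ, (1 - a * q ^ j)

/-- The q-difference operator `D_q f(x) = (f(x) - f(qx))/x`. -/
noncomputable def Dq (q : ℂ) (f : ℂ → ℂ) : ℂ → ℂ := fun x => (f x - f (q * x)) / x

/-!
`F(x) = 1 / ((ax;q)_∞ (bx;q)_∞)` satisfies `F(qx) = (1 - ax)(1 - bx) F(x)`, because each
infinite product loses its first factor under `x ↦ qx`. Hence
`D_q (F g) = F · (g(x) - (1 - ax)(1 - bx) g(qx)) / x`, and by induction it suffices that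
`S_n(x) = ∑_k [n choose k]_q a^k b^(n-k) (bx;q)_k` satisfies
`x S_{n+1}(x) = S_n(x) - (1 - ax)(1 - bx) S_n(qx)`. Termwise this is
`(1 - bx)(bqx;q)_k = (bx;q)_{k+1}`, after which the two halves recombine by the q-Pascal rule
`[n+1, k] = [n, k-1] + q^k [n, k]`.
-/

open Finset

@[simp] lemma qPoch_zero (c q : ℂ) : qPoch c q 0 = 1 := prod_range_zero _

lemma qPoch_succ (c q : ℂ) (n : ℕ) : qPoch c q (n + 1) = qPoch c q n * (1 - c * q ^ n) :=
  prod_range_succ _ _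

lemma qPoch_succ' (c q : ℂ) (n : ℕ) : qPoch c q (n + 1) = (1 - c) * qPoch (c * q) q n := by
  simp only [qPoch, prod_range_succ', pow_zero, mul_one, pow_succ', mul_assoc, mul_comm]

section qBinom

variable {q : ℂ}

lemma pow_succ_ne_one_of_norm_lt_one (hq : ‖q‖ < 1) (j : ℕ) : q ^ (j + 1) ≠ 1 := fun h => by
  simpa [← norm_pow, h] using pow_lt_one₀ (norm_nonneg q) hq (Nat.succ_ne_zero j)

lemma qPoch_self_ne_zero (hq : ∀ j, q ^ (j + 1) ≠ 1) (n : ℕ) : qPoch q q n ≠ 0 :=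
  prod_ne_zero_iff.2 fun j _ => by rw [← pow_succ']; exact sub_ne_zero.2 (hq j).symm

lemma qBinom_zero_right (hq : ∀ j, q ^ (j + 1) ≠ 1) (n : ℕ) : qBinom q n 0 = 1 := by
  rw [qBinom, Nat.sub_zero, qPoch_zero, one_mul, div_self (qPoch_self_ne_zero hq n)]

lemma qBinom_self (hq : ∀ j, q ^ (j + 1) ≠ 1) (n : ℕ) : qBinom q n n = 1 := by
  rw [qBinom, Nat.sub_self, qPoch_zero, mul_one, div_self (qPoch_self_ne_zero hq n)]

lemma qBinom_succ_succ (hq : ∀ j, q ^ (j + 1) ≠ 1) {n k : ℕ} (hk : k < n) :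
    qBinom q (n + 1) (k + 1) = qBinom q n k + q ^ (k + 1) * qBinom q n (k + 1) := by
  obtain ⟨m, rfl⟩ : ∃ m, n = k + 1 + m := ⟨n - (k + 1), by omega⟩
  have e₁ : k + 1 + m + 1 - (k + 1) = m + 1 := by omega
  have e₂ : k + 1 + m - k = m + 1 := by omega
  have e₃ : k + 1 + m - (k + 1) = m := by omega
  simp only [qBinom, e₁, e₂, e₃, qPoch_succ q q (k + 1 + m), qPoch_succ q q k,
    qPoch_succ q q m]
  have hqk := sub_ne_zero.2 (hq k).symm
  have hqm := sub_ne_zero.2 (hq m).symm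
  rw [pow_succ'] at hqk hqm
  have := qPoch_self_ne_zero hq k
  have := qPoch_self_ne_zero hq m
  field_simp
  ring

lemma sum_qBinom_succ (hq : ∀ j, q ^ (j + 1) ≠ 1) (b : ℂ) (u : ℕ → ℂ) (n : ℕ) :
    ∑ k ∈ range (n + 2), qBinom q (n + 1) k * b ^ (n + 1 - k) * u k =
      ∑ k ∈ range (n + 1), qBinom q n k * b ^ (n - k) * (u (k + 1) + q ^ k * b * u k) := by
  -- `qBinom q n k` is junk rather than `0` for `k > n`, so the extreme terms are split off by hand.
  have pascal : ∀ k ∈ range n, qBinom q (n + 1) (k + 1) * b ^ (n + 1 - (k + 1)) * u (k + 1) =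
      qBinom q n k * b ^ (n - k) * u (k + 1) +
        qBinom q n (k + 1) * b ^ (n - (k + 1)) * (q ^ (k + 1) * b * u (k + 1)) := by
    intro k hk_mem
    have hk : k < n := mem_range.1 hk_mem
    rw [qBinom_succ_succ hq hk, show n + 1 - (k + 1) = n - (k + 1) + 1 by omega,
      show n - k = n - (k + 1) + 1 by omega, pow_succ]
    ring
  simp only [mul_add, sum_add_distrib]
  rw [sum_range_succ, sum_range_succ', sum_congr rfl pascal, sum_add_distrib,
    sum_range_succ _ n, sum_range_succ' _ n]
  simp only [qBinom_zero_right hq, qBinom_self hq, Nat.sub_self, Nat.sub_zero,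
    pow_zero, pow_succ]
  ring

end qBinom

noncomputable def qBinomPochSum (q a b : ℂ) (n : ℕ) (x : ℂ) : ℂ :=
  ∑ k ∈ range (n + 1), qBinom q n k * a ^ k * b ^ (n - k) * qPoch (b * x) q k

lemma mul_qBinomPochSum_succ {q : ℂ} (hq : ∀ j, q ^ (j + 1) ≠ 1) (a b x : ℂ) (n : ℕ) :
    x * qBinomPochSum q a b (n + 1) x =
      qBinomPochSum q a b n x - (1 - a * x) * (1 - b * x) * qBinomPochSum q a b n (q * x) := by
  have step : ∀ k, (1 - b * x) * qPoch (b * (q * x)) q k = qPoch (b * x) q (k + 1) := fun k => by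
    rw [qPoch_succ', mul_assoc, mul_comm x q]
  have regroup : qBinomPochSum q a b (n + 1) x =
      ∑ k ∈ range (n + 2), qBinom q (n + 1) k * b ^ (n + 1 - k) * (a ^ k * qPoch (b * x) q k) :=
    sum_congr rfl fun k _ => by ring
  rw [regroup, sum_qBinom_succ hq, qBinomPochSum, qBinomPochSum, mul_sum, mul_sum,
    ← sum_sub_distrib]
  refine sum_congr rfl fun k _ => ?_
  linear_combination
    (qBinom q n k * a ^ k * b ^ (n - k)) * ((1 - a * x) * step k + qPoch_succ (b * x) q k)

section qPochInf

variable {q : ℂ}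

lemma multipliable_one_sub_mul_pow (hq : ‖q‖ < 1) (c : ℂ) :
    Multipliable fun j : ℕ => 1 - c * q ^ j := by
  have hsum : Summable fun j : ℕ => ‖-(c * q ^ j)‖ := by
    simpa [norm_mul, norm_pow] using
      (summable_geometric_of_lt_one (norm_nonneg q) hq).mul_left ‖c‖
  simpa [sub_eq_add_neg] using multipliable_one_add_of_summable hsum

lemma qPochInf_eq_one_sub_mul (hq : ‖q‖ < 1) (c : ℂ) :
    qPochInf c q = (1 - c) * qPochInf (c * q) q := by
  have shift : (fun j : ℕ => 1 - c * q ^ (j + 1)) = fun j => 1 - c * q * q ^ j := by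
    simp only [pow_succ', mul_assoc]
  rw [qPochInf, tprod_eq_zero_mul' (by rw [shift]; exact multipliable_one_sub_mul_pow hq (c * q)),
    pow_zero, mul_one, shift, qPochInf]

lemma one_div_qPochInf_mul_qPochInf_q_mul (hq : ‖q‖ < 1) {a b x : ℂ} (ha : a * x ≠ 1)
    (hb : b * x ≠ 1) :
    1 / (qPochInf (a * (q * x)) q * qPochInf (b * (q * x)) q) =
      1 / (qPochInf (a * x) q * qPochInf (b * x) q) * ((1 - a * x) * (1 - b * x)) := by
  have ha' := sub_ne_zero.2 ha.symm
  have hb' := sub_ne_zero.2 hb.symm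
  have shift : ∀ c, qPochInf (c * x) q = (1 - c * x) * qPochInf (c * (q * x)) q := fun c => by
    rw [qPochInf_eq_one_sub_mul hq, mul_assoc, mul_comm x q]
  rw [shift a, shift b, mul_mul_mul_comm, div_mul_eq_mul_div, one_mul,
    div_mul_cancel_left₀ (mul_ne_zero ha' hb'), one_div]

end qPochInf

theorem Dq_iter_double_reciprocal_general (q a b : ℂ) (hq0 : 0 < ‖q‖) (hq : ‖q‖ < 1) (n : ℕ)
    (x : ℂ) (hx : x ≠ 0) (hax : ‖a * x‖ < 1) (hbx : ‖b * x‖ < 1) :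
    (Dq q)^[n] (fun t => 1 / (qPochInf (a * t) q * qPochInf (b * t) q)) x =
      1 / (qPochInf (a * x) q * qPochInf (b * x) q) *
        ∑ k ∈ Finset.range (n + 1),
          qBinom q n k * a ^ k * b ^ (n - k) * qPoch (b * x) q k := by
  have hq1 := pow_succ_ne_one_of_norm_lt_one hq
  have hq_ne : q ≠ 0 := norm_pos_iff.1 hq0
  change _ = _ * qBinomPochSum q a b n x
  induction n generalizing x with
  | zero => simp [qBinomPochSum, qBinom_self hq1]
  | succ n ih =>
    have shrink : ∀ c, ‖c * x‖ < 1 → ‖c * (q * x)‖ < 1 := fun c hc => by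
      rw [mul_left_comm, norm_mul]
      exact mul_lt_one_of_nonneg_of_lt_one_left (norm_nonneg q) hq hc.le
    have ne_one : ∀ {c : ℂ}, ‖c * x‖ < 1 → c * x ≠ 1 := fun hc h => by simp [h] at hc
    rw [Function.iterate_succ_apply', Dq, ih x hx hax hbx,
      ih (q * x) (mul_ne_zero hq_ne hx) (shrink a hax) (shrink b hbx),
      one_div_qPochInf_mul_qPochInf_q_mul hq (ne_one hax) (ne_one hbx),
      ← mul_div_cancel_left₀ (qBinomPochSum q a b (n + 1) x) hx, mul_qBinomPochSum_succ hq1]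
    ring

theorem Dq_iter_double_reciprocal (q a b : ℂ) (hq0 : 0 < ‖q‖) (hq : ‖q‖ < 1) (n : ℕ)
    (hn : 1 ≤ n) (x : ℂ) (hx : x ≠ 0) (hax : ‖a * x‖ < 1) (hbx : ‖b * x‖ < 1) :
    (Dq q)^[n] (fun t => 1 / (qPochInf (a * t) q * qPochInf (b * t) q)) x =
      1 / (qPochInf (a * x) q * qPochInf (b * x) q) *
        ∑ k ∈ Finset.range (n + 1),
          qBinom q n k * a ^ k * b ^ (n - k) * qPoch (b * x) q k :=
  Dq_iter_double_reciprocal_general q a b hq0 hq n x hx hax hbx
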